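/- (Theorem 1) Let n be a positive integer, let R_req and R_max be real numbers with 0 < R_req ≤ R_max < 1, let R_1, …, R_n ∈ (0,1) satisfy ∏_{i=1}^n R_i = R_max, and define the bounds b_i = R_req^{(log R_i)/(log R_max)} and the targets t_i = (∏_{j=1}^{i} b_j) / (∏_{j=1}^{i-1} a_j). If the achieved reliabilities a_1, …, a_n are positive reals satisfying a_i ≥ t_i for every i ∈ {1,…,n}, then ∏_{i=1}^n a_i ≥ R_req; that is, any reliability constraint R_req ≤ R_max can be satisfied by the target-based allocation strategy. -/

import Mathlib

/-!
The bounds split `R_req` along the factors of `R_max`: since `∑ log R_i = log R_max`, the exponents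
`log R_i / log R_max` sum to one and `∏ b_i = R_req`. The targets telescope, so the last constraint
alone gives `∏ a_i = (∏_{j<n} a_j) · a_n ≥ ∏ b_i = R_req`.
-/

open Finset

theorem prod_rpow_log_div_log_prod {ι : Type*} (s : Finset ι) {x : ℝ} (hx : 0 < x)
    {R : ι → ℝ} (hR : ∀ i ∈ s, R i ≠ 0) (hlog : Real.log (∏ i ∈ s, R i) ≠ 0) :
    ∏ i ∈ s, x ^ (Real.log (R i) / Real.log (∏ j ∈ s, R j)) = x := by
  rw [← Real.rpow_sum_of_pos hx, ← sum_div, ← Real.log_prod hR, div_self hlog,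
    Real.rpow_one]

theorem prod_Icc_le_prod_of_div_le {a b : ℕ → ℝ} (m : ℕ) (hpos : ∀ i ∈ Icc 1 m, 0 < a i)
    (hlast : (∏ j ∈ Icc 1 (m + 1), b j) / ∏ j ∈ Icc 1 m, a j ≤ a (m + 1)) :
    ∏ j ∈ Icc 1 (m + 1), b j ≤ ∏ j ∈ Icc 1 (m + 1), a j := by
  rw [div_le_iff₀ (prod_pos hpos)] at hlast
  rwa [prod_Icc_succ_top (by omega : 1 ≤ m + 1) a, mul_comm]

theorem theorem1_constraint_satisfiable_general
    (n : ℕ) (Rreq Rmax : ℝ)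
    (hreq : 0 < Rreq) (hle : Rreq ≤ Rmax) (hmax : Rmax < 1)
    (R : ℕ → ℝ) (hR : ∀ i ∈ Finset.Icc 1 n, R i ∈ Set.Ioo (0 : ℝ) 1)
    (hprod : ∏ i ∈ Finset.Icc 1 n, R i = Rmax)
    (b : ℕ → ℝ)
    (hb : ∀ i ∈ Finset.Icc 1 n, b i = Rreq ^ (Real.log (R i) / Real.log Rmax))
    (a : ℕ → ℝ) (hapos : ∀ i ∈ Finset.Icc 1 n, 0 < a i)
    (t : ℕ → ℝ)
    (ht : ∀ i ∈ Finset.Icc 1 n,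
      t i = (∏ j ∈ Finset.Icc 1 i, b j) / ∏ j ∈ Finset.Icc 1 (i - 1), a j)
    (hat : ∀ i ∈ Finset.Icc 1 n, a i ≥ t i) :
    ∏ i ∈ Finset.Icc 1 n, a i ≥ Rreq := by
  have hlog : Real.log Rmax ≠ 0 := (Real.log_neg (hreq.trans_le hle) hmax).ne
  have hbprod : ∏ i ∈ Icc 1 n, b i = Rreq := by
    rw [prod_congr rfl hb, ← hprod]
    exact prod_rpow_log_div_log_prod _ hreq (fun i hi => (hR i hi).1.ne') (hprod ▸ hlog)
  rcases n with _ | m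
  · simp only [Icc_eq_empty_of_lt zero_lt_one, prod_empty]
    linarith
  · have hlast : m + 1 ∈ Icc 1 (m + 1) := right_mem_Icc.mpr (by omega)
    have htarget := hat _ hlast
    rw [ht _ hlast, Nat.add_sub_cancel] at htarget
    rw [ge_iff_le, ← hbprod]
    exact prod_Icc_le_prod_of_div_le m
      (fun i hi => hapos i (Icc_subset_Icc_right m.le_succ hi)) htarget

theorem theorem1_constraint_satisfiable
    (n : ℕ) (hn : 0 < n) (Rreq Rmax : ℝ)
    (hreq : 0 < Rreq) (hle : Rreq ≤ Rmax) (hmax : Rmax < 1)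
    (R : ℕ → ℝ) (hR : ∀ i ∈ Finset.Icc 1 n, R i ∈ Set.Ioo (0 : ℝ) 1)
    (hprod : ∏ i ∈ Finset.Icc 1 n, R i = Rmax)
    (b : ℕ → ℝ)
    (hb : ∀ i ∈ Finset.Icc 1 n, b i = Rreq ^ (Real.log (R i) / Real.log Rmax))
    (a : ℕ → ℝ) (hapos : ∀ i ∈ Finset.Icc 1 n, 0 < a i)
    (t : ℕ → ℝ)
    (ht : ∀ i ∈ Finset.Icc 1 n,
      t i = (∏ j ∈ Finset.Icc 1 i, b j) / ∏ j ∈ Finset.Icc 1 (i - 1), a j)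
    (hat : ∀ i ∈ Finset.Icc 1 n, a i ≥ t i) :
    ∏ i ∈ Finset.Icc 1 n, a i ≥ Rreq :=
  theorem1_constraint_satisfiable_general n Rreq Rmax hreq hle hmax R hR hprod b hb a hapos t ht hat
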